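/- arXiv:1303.6799 — 5 statements merged into one kernel-verified Lean document; each statement's English description precedes it below -/
import Mathlib

section
/- If G is a black-and-white graph in which every connected component contains at least one black vertex, then there exists a successful pressing path, i.e., a finite sequence of presses transforming G into the all-white edgeless graph. -/
structure BW (V : Type) where
  adj : V → V → Bool
  black : V → Bool
  symm : ∀ u w, adj u w = adj w u
  irrefl : ∀ v, adj v v = false

variable {V : Type} [DecidableEq V]

/-- Pressing a vertex `v`: neighbors toggle color, pairs of neighbors toggle
adjacency, and `v` becomes white and isolated. -/
def press (G : BW V) (v : V) : BW V where
  adj u w :=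
    if u = v ∨ w = v ∨ u = w then false
    else xor (G.adj u w) (G.adj u v && G.adj w v)
  black u := if u = v then false else xor (G.black u) (G.adj u v)
  symm := by
    intro u w
    by_cases h1 : u = v <;> by_cases h2 : w = v <;> by_cases h3 : u = w <;>
      simp_all [G.symm u w, Bool.xor_comm, Bool.and_comm] <;> tauto
  irrefl := by intro u; simp

/-- The graph obtained after pressing the vertices of a list in order. -/
def pressPath (G : BW V) : List V → BW V
  | [] => G
  | v :: P => pressPath (press G v) P

/-- A pressing path is valid if every vertex is black when it is pressed. -/
def ValidPath (G : BW V) : List V → Prop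
  | [] => True
  | v :: P => G.black v = true ∧ ValidPath (press G v) P

/-- The all-white, edgeless graph. -/
def AllWhiteEmpty (G : BW V) : Prop :=
  (∀ v, G.black v = false) ∧ ∀ u w, G.adj u w = false

/-- A successful pressing path: valid and leading to the all-white empty graph. -/
def Successful (G : BW V) (P : List V) : Prop :=
  ValidPath G P ∧ AllWhiteEmpty (pressPath G P)

/-- The underlying simple graph of a black-and-white graph. -/
def BW.toSimple (G : BW V) : SimpleGraph V where
  Adj u w := G.adj u w = true
  symm := ⟨fun u w h => (G.symm w u).trans h⟩
  loopless := ⟨fun v h => by simp [G.irrefl] at h⟩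

/-- `l` enumerates the vertices as a path: `G` is linear with vertex order `l`. -/
def IsPathList (G : BW V) (l : List V) : Prop :=
  l.Nodup ∧ (∀ v, v ∈ l) ∧
    ∀ u w, G.adj u w = true ↔ ∃ i,
      (l[i]? = some u ∧ l[i+1]? = some w) ∨ (l[i]? = some w ∧ l[i+1]? = some u)

/-- A linear (path) black-and-white graph. -/
def IsLinear (G : BW V) : Prop := ∃ l, IsPathList G l

/-- Adjacency step in the metagraph of successful pressing paths:
their longest common subsequence misses at most 2 presses. -/
def Step (G : BW V) (P Q : List V) : Prop :=
  Successful G P ∧ Successful G Q ∧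
    ∃ R : List V, R.Sublist P ∧ R.Sublist Q ∧ P.length ≤ R.length + 2

/-- Transposition of two consecutive presses which are non-adjacent at that moment. -/
def SwapStep (G : BW V) (P Q : List V) : Prop :=
  ∃ A u w B, P = A ++ u :: w :: B ∧ Q = A ++ w :: u :: B ∧
    (pressPath G A).adj u w = false

/-- The induced black-and-white graph on a subset of the vertices. -/
def BW.restrict (G : BW V) (p : V → Prop) [DecidablePred p] : BW {u // p u} where
  adj u w := G.adj u.1 w.1
  black u := G.black u.1
  symm := fun u w => G.symm u.1 w.1
  irrefl := fun u => G.irrefl u.1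

/-- The all-black path graph on `n` vertices. -/
def pathAllBlack (n : ℕ) : BW (Fin n) where
  adj i j := decide (i.1 + 1 = j.1 ∨ j.1 + 1 = i.1)
  black _ := true
  symm := by intro u w; simp [or_comm]
  irrefl := by intro v; simp


/-!
Call `G` good if every non-trivial component has a black vertex. Each press strictly shrinks the
set of vertices that are black or non-isolated, and a good graph without black vertices is
all-white and edgeless, so it suffices to find in every good graph a black vertex whose press
leaves a good graph.

Press a black vertex `v` with fewest black vertices in its closed neighbourhood `N[v]` and, among
those, with `N[v]` largest. Suppose this leaves an all-white non-trivial component `C`. Then `C`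
contains a former neighbour `s` of `v`, for otherwise `C` was already a component of `G` without a
black vertex. Whiteness of `C` after the press forces `s` to be black, the black part of `N[s]` to
lie in that of `N[v]`, and (once these are equal, by minimality) `N[v] ⊆ N[s]`. Maximality gives
`N[s] = N[v]`, but then pressing `v` isolates `s`, contradicting that `C` is non-trivial.
-/

theorem SimpleGraph.Reachable.eq_of_forall_not_adj {W : Type*} {G : SimpleGraph W} {u s : W}
    (h : G.Reachable u s) (hs : ∀ y, ¬ G.Adj s y) : u = s := by
  obtain ⟨p⟩ := h.symm
  cases p with
  | nil => rfl
  | cons hadj _ => exact absurd hadj (hs _)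

theorem SimpleGraph.Reachable.of_adj_of_reachable {W : Type*} {G H : SimpleGraph W} {u x : W}
    (hGH : ∀ a b, H.Reachable u a → G.Adj a b → H.Adj a b) (h : G.Reachable u x) :
    H.Reachable u x := by
  rw [SimpleGraph.reachable_iff_reflTransGen] at h
  induction h with
  | refl => rfl
  | tail _ hab ih => exact ih.trans (hGH _ _ ih hab).reachable

def BW.BlackInNontrivialComponents (G : BW V) : Prop :=
  ∀ u w, G.adj u w = true → ∃ x, G.toSimple.Reachable u x ∧ G.black x = true

omit [DecidableEq V] in
theorem BW.BlackInNontrivialComponents.allWhiteEmpty {G : BW V} (hG : G.BlackInNontrivialComponents)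
    (hb : ∀ x, G.black x = false) : AllWhiteEmpty G := by
  refine ⟨hb, fun u w => ?_⟩
  by_contra huw
  obtain ⟨x, -, hx⟩ := hG u w (by simpa using huw)
  simp [hb x] at hx

section Press

variable {G : BW V} {s v x : V}

theorem press_adj (G : BW V) (v a b : V) :
    (press G v).adj a b =
      if a = v ∨ b = v ∨ a = b then false else xor (G.adj a b) (G.adj a v && G.adj b v) :=
  rfl

theorem press_black (G : BW V) (v a : V) :
    (press G v).black a = if a = v then false else xor (G.black a) (G.adj a v) :=
  rfl

theorem press_adj_self_left (G : BW V) (v y : V) : (press G v).adj v y = false := by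
  simp [press_adj]

omit [DecidableEq V] in
theorem BW.ne_of_adj {a b : V} (h : G.adj a b = true) : a ≠ b := by
  rintro rfl
  simp [G.irrefl] at h

theorem press_adj_of_adj_eq_false {a b : V} (ha : G.adj a v = false) (hav : a ≠ v) (hbv : b ≠ v) :
    (press G v).adj a b = G.adj a b := by
  by_cases hab : a = b
  · subst hab; simp [press_adj, G.irrefl]
  · simp [press_adj, ha, hav, hbv, hab]

theorem press_black_of_adj {a : V} (ha : G.adj a v = true) :
    (press G v).black a = !G.black a := by
  simp [press_black, ha, G.ne_of_adj ha]

theorem black_eq_adj_of_press_white (hsv : G.adj s v = true) (hxs : x ≠ s) (hxv : x ≠ v)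
    (hwhite : (press G v).adj s x = true → (press G v).black x = false)
    (hne : G.adj s x ≠ G.adj x v) : G.black x = G.adj x v := by
  have hsv' : s ≠ v := G.ne_of_adj hsv
  simp only [press_adj, press_black, hsv, hxv, hsv', Ne.symm hxs, false_or, if_false,
    Bool.true_and] at hwhite
  revert hwhite hne
  cases G.adj s x <;> cases G.adj x v <;> cases G.black x <;> simp

end Press

section Neighborhoods

variable [Fintype V] {G : BW V} {s v x y : V}

def BW.closedNbhd (G : BW V) (x : V) : Finset V :=
  Finset.univ.filter fun y => y = x ∨ G.adj x y = true

def BW.closedBlackNbhd (G : BW V) (x : V) : Finset V :=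
  (G.closedNbhd x).filter fun y => G.black y = true

theorem BW.mem_closedNbhd : y ∈ G.closedNbhd x ↔ y = x ∨ G.adj x y = true := by
  simp [BW.closedNbhd]

theorem BW.mem_closedBlackNbhd :
    y ∈ G.closedBlackNbhd x ↔ (y = x ∨ G.adj x y = true) ∧ G.black y = true := by
  simp [BW.closedBlackNbhd, BW.closedNbhd]

theorem closedBlackNbhd_subset_of_press_white (hsv : G.adj s v = true)
    (hwhite : ∀ x, (press G v).adj s x = true → (press G v).black x = false) :
    G.closedBlackNbhd s ⊆ G.closedBlackNbhd v := by
  intro x hx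
  rw [BW.mem_closedBlackNbhd] at hx ⊢
  refine ⟨?_, hx.2⟩
  by_cases hxv : x = v
  · exact Or.inl hxv
  right
  rcases hx with ⟨rfl | hsx, hxb⟩
  · exact (G.symm v x).trans hsv
  · by_contra hxv'
    have := black_eq_adj_of_press_white hsv (G.ne_of_adj hsx).symm hxv (hwhite x)
    simp_all [G.symm v x]

theorem closedNbhd_subset_of_press_white (hv : G.black v = true) (hsv : G.adj s v = true)
    (hs : G.black s = true)
    (hwhite : ∀ x, (press G v).adj s x = true → (press G v).black x = false)
    (hB : G.closedBlackNbhd v ⊆ G.closedBlackNbhd s) :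
    G.closedNbhd v ⊆ G.closedNbhd s := by
  intro x hx
  cases hxb : G.black x
  · rw [BW.mem_closedNbhd] at hx ⊢
    have hxv : x ≠ v := by rintro rfl; simp_all
    have hvx : G.adj v x = true := hx.resolve_left hxv
    have hxs : x ≠ s := by rintro rfl; simp_all
    right
    by_contra hsx
    have := black_eq_adj_of_press_white hsv hxs hxv (hwhite x)
    simp_all [G.symm v x]
  · have := hB (BW.mem_closedBlackNbhd.2 ⟨BW.mem_closedNbhd.1 hx, hxb⟩)
    exact Finset.mem_filter.1 this |>.1

theorem press_adj_eq_false_of_closedNbhd_eq (hsv : s ≠ v)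
    (h : G.closedNbhd s = G.closedNbhd v) (y : V) : (press G v).adj s y = false := by
  have hmem : ∀ z, (z = s ∨ G.adj s z = true) ↔ (z = v ∨ G.adj v z = true) := fun z => by
    rw [← BW.mem_closedNbhd, ← BW.mem_closedNbhd, h]
  have hadj : G.adj s v = true := ((hmem v).2 (Or.inl rfl)).resolve_left hsv.symm
  by_cases hy : y = v ∨ s = y
  · simp [press_adj, hy]
  · push Not at hy
    have : G.adj s y = G.adj y v := by
      rw [G.symm y v, Bool.eq_iff_iff]
      simpa [hy.1, Ne.symm hy.2] using hmem y
    simp [press_adj, hsv, hy.1, hy.2, hadj, this]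

end Neighborhoods

theorem exists_reachable_adj_of_press_white {G : BW V} {v u w : V}
    (hG : G.BlackInNontrivialComponents) (huw : (press G v).adj u w = true)
    (hwhite : ∀ x, (press G v).toSimple.Reachable u x → (press G v).black x = false) :
    ∃ s, (press G v).toSimple.Reachable u s ∧ G.adj s v = true := by
  set H := press G v
  by_contra! hS
  have hfar : ∀ x, H.toSimple.Reachable u x → G.adj x v = false := fun x hx => by
    simpa using hS x hx
  have hne : ∀ x, H.toSimple.Reachable u x → x ≠ v := by
    rintro x hx rfl
    obtain rfl := hx.eq_of_forall_not_adj fun y => by simp [BW.toSimple, H, press_adj_self_left]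
    simp [H, press_adj_self_left] at huw
  have hwv : w ≠ v := by
    rintro rfl
    simp [H, H.symm u, press_adj_self_left] at huw
  have hGH : ∀ x, G.toSimple.Reachable u x → H.toSimple.Reachable u x := fun x =>
    SimpleGraph.Reachable.of_adj_of_reachable fun a b ha hab => by
      have hbv : b ≠ v := by rintro rfl; simp [BW.toSimple, hfar a ha] at hab
      show H.adj a b = true
      rwa [press_adj_of_adj_eq_false (hfar a ha) (hne a ha) hbv]
  have hGuw : G.adj u w = true := by
    rwa [press_adj_of_adj_eq_false (hfar u .rfl) (hne u .rfl) hwv] at huw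
  obtain ⟨x, hux, hx⟩ := hG u w hGuw
  have := hwhite x (hGH x hux)
  simp [H, press_black, hne x (hGH x hux), hx, hfar x (hGH x hux)] at this

section Fintype

variable [Fintype V] {G : BW V} {v : V}

def BW.pressKey (G : BW V) (x : V) : ℕ ×ₗ ℕᵒᵈ :=
  toLex ((G.closedBlackNbhd x).card, OrderDual.toDual (G.closedNbhd x).card)

theorem BW.BlackInNontrivialComponents.press_of_pressKey_le (hG : G.BlackInNontrivialComponents)
    (hv : G.black v = true) (hmin : ∀ x, G.black x = true → G.pressKey v ≤ G.pressKey x) :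
    (press G v).BlackInNontrivialComponents := by
  intro u w huw
  set H := press G v
  by_contra! hwhite'
  have hwhite : ∀ x, H.toSimple.Reachable u x → H.black x = false := fun x hx => by
    simpa using hwhite' x hx
  obtain ⟨s, hus, hsv⟩ := exists_reachable_adj_of_press_white hG huw hwhite
  have hs : G.black s = true := by simpa [H, press_black_of_adj hsv] using hwhite s hus
  have hnbr : ∀ x, H.adj s x = true → H.black x = false := fun x hsx =>
    hwhite x (hus.trans (SimpleGraph.Adj.reachable (G := H.toSimple) hsx))
  have hB := closedBlackNbhd_subset_of_press_white hsv hnbr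
  have hkey := hmin s hs
  rw [BW.pressKey, BW.pressKey, Prod.Lex.toLex_le_toLex] at hkey
  obtain hlt | ⟨hcard, hdeg⟩ := hkey
  · exact absurd (Finset.card_le_card hB) (by omega)
  have hBeq := Finset.eq_of_subset_of_card_le hB hcard.le
  have hN := closedNbhd_subset_of_press_white hv hsv hs hnbr hBeq.superset
  have hNeq := (Finset.eq_of_subset_of_card_le hN (OrderDual.toDual_le_toDual.1 hdeg)).symm
  have hiso := press_adj_eq_false_of_closedNbhd_eq (G.ne_of_adj hsv) hNeq
  obtain rfl : u = s := hus.eq_of_forall_not_adj (by simp [BW.toSimple, hiso])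
  simp [H, hiso] at huw

theorem BW.exists_black_forall_pressKey_le (h : ∃ v, G.black v = true) :
    ∃ v, G.black v = true ∧ ∀ x, G.black x = true → G.pressKey v ≤ G.pressKey x := by
  obtain ⟨v₀, hv₀⟩ := h
  obtain ⟨v, hv, hmin⟩ := Finset.exists_min_image (Finset.univ.filter (G.black · = true))
    G.pressKey ⟨v₀, by simpa using hv₀⟩
  exact ⟨v, by simpa using hv, fun x hx => hmin x (by simpa using hx)⟩

def BW.activeVertices (G : BW V) : Finset V :=
  Finset.univ.filter fun x => G.black x = true ∨ ∃ w, G.adj x w = true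

theorem card_activeVertices_press_lt (hv : G.black v = true) :
    (press G v).activeVertices.card < G.activeVertices.card := by
  refine Finset.card_lt_card ((Finset.ssubset_iff_of_subset ?_).2 ⟨v, ?_, ?_⟩)
  · intro x hx
    simp only [BW.activeVertices, Finset.mem_filter, Finset.mem_univ, true_and] at hx ⊢
    by_cases hxv : G.adj x v = true
    · exact Or.inr ⟨v, hxv⟩
    rcases hx with hb | ⟨w, hw⟩
    · left
      rw [press_black] at hb
      split_ifs at hb; simp_all
    · right
      rw [press_adj] at hw
      exact ⟨w, by split_ifs at hw; simp_all⟩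
  · simp [BW.activeVertices, hv]
  · simp [BW.activeVertices, press_black, press_adj_self_left]

end Fintype

theorem BW.BlackInNontrivialComponents.exists_successful [Fintype V] {G : BW V}
    (hG : G.BlackInNontrivialComponents) :
    ∃ P, Successful G P := by
  by_cases hb : ∃ v, G.black v = true
  · obtain ⟨v, hv, hmin⟩ := G.exists_black_forall_pressKey_le hb
    obtain ⟨P, hP, hend⟩ := (hG.press_of_pressKey_le hv hmin).exists_successful
    exact ⟨v :: P, ⟨hv, hP⟩, hend⟩
  · push Not at hb
    exact ⟨[], trivial, hG.allWhiteEmpty (by simpa using hb)⟩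
termination_by G.activeVertices.card
decreasing_by exact card_activeVertices_press_lt hv

/-- If every connected component of `G` contains a black vertex, then there
exists a successful pressing path. -/
theorem stmt1 {V : Type} [DecidableEq V] [Fintype V] (G : BW V)
    (h : ∀ u : V, ∃ w : V, (BW.toSimple G).Reachable u w ∧ G.black w = true) :
    ∃ P : List V, Successful G P :=
  BW.BlackInNontrivialComponents.exists_successful fun u _ _ => h u
end

section
/- Pressing a black vertex of a linear (path) black-and-white graph yields a graph which is the disjoint union of a linear graph and the isolated white pressed vertex. (Self-reducibility of the pressing game on linear graphs.) -/
variable {V : Type} [DecidableEq V]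

/-!
Number the vertices of the path by their position in it. Pressing `v` deletes `v` from the
sequence, which moves every later vertex one step forward. Two remaining vertices are then
consecutive exactly when they were consecutive before or were the two neighbours of `v`; in a
path these two cases exclude each other, so this is precisely the adjacency toggle of `press`.
-/

namespace List

variable {α : Type*} [BEq α] [LawfulBEq α]

theorem idxOf_unattach {p : α → Prop} [BEq {x // p x}] [LawfulBEq {x // p x}]
    (l : List {x // p x}) (a : {x // p x}) :
    l.unattach.idxOf a.1 = l.idxOf a := by
  simp only [idxOf, unattach, findIdx_map]
  congr 1
  funext x
  simp [Subtype.ext_iff]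

theorem idxOf_erase_of_ne {l : List α} {v x : α} (hv : v ∈ l) (hx : x ≠ v) :
    (l.erase v).idxOf x = if l.idxOf x < l.idxOf v then l.idxOf x else l.idxOf x - 1 := by
  obtain ⟨A, B, hvA, rfl, hAB⟩ := exists_erase_eq hv
  rw [hAB]
  by_cases hxA : x ∈ A
  · simp [idxOf_append, hxA, hvA, idxOf_lt_length_of_mem hxA]
  · simp [idxOf_append, hxA, hvA, hx.symm]

theorem Nodup.getElem?_eq_some_iff_idxOf {l : List α} (hl : l.Nodup) {x : α} (hx : x ∈ l) {i : ℕ} :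
    l[i]? = some x ↔ l.idxOf x = i := by
  constructor
  · intro h
    obtain ⟨hi, rfl⟩ := List.getElem?_eq_some_iff.1 h
    exact hl.idxOf_getElem i hi
  · rintro rfl
    exact getElem?_idxOf hx

theorem Nodup.consecutive_iff_idxOf {l : List α} (hl : l.Nodup) {x y : α} (hx : x ∈ l)
    (hy : y ∈ l) : (∃ i, l[i]? = some x ∧ l[i + 1]? = some y) ↔ l.idxOf x + 1 = l.idxOf y := by
  simp only [hl.getElem?_eq_some_iff_idxOf hx, hl.getElem?_eq_some_iff_idxOf hy]
  exact ⟨fun ⟨_, hi, hi'⟩ => hi ▸ hi'.symm, fun h => ⟨_, rfl, h.symm⟩⟩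

end List

-- `if x < c then x else x - 1` is the position of `x` once position `c` has been deleted.
theorem adjacent_after_erase_iff {a b c : ℕ} (hab : a ≠ b) (hac : a ≠ c) (hbc : b ≠ c) :
    ((if a < c then a else a - 1) + 1 = (if b < c then b else b - 1) ∨
      (if b < c then b else b - 1) + 1 = (if a < c then a else a - 1)) ↔
    Xor (a + 1 = b ∨ b + 1 = a) ((a + 1 = c ∨ c + 1 = a) ∧ (b + 1 = c ∨ c + 1 = b)) := by
  rw [xor_iff_not_iff]
  split_ifs <;> omega

section

variable {V : Type} [DecidableEq V]

theorem isPathList_iff_idxOf {G : BW V} {l : List V} :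
    IsPathList G l ↔ l.Nodup ∧ (∀ v, v ∈ l) ∧ ∀ u w, G.adj u w = true ↔
      l.idxOf u + 1 = l.idxOf w ∨ l.idxOf w + 1 = l.idxOf u := by
  refine and_congr_right fun hl => and_congr_right fun hmem => ?_
  simp only [exists_or, hl.consecutive_iff_idxOf (hmem _) (hmem _)]

theorem IsLinear.press_restrict {G : BW V} (hG : IsLinear G) (v : V) :
    IsLinear ((press G v).restrict (· ≠ v)) := by
  obtain ⟨l, hl⟩ := hG
  obtain ⟨hnd, hmem, hadj⟩ := isPathList_iff_idxOf.1 hl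
  refine ⟨(l.erase v).attachWith (· ≠ v) fun _ hx => (hnd.mem_erase_iff.1 hx).1,
    isPathList_iff_idxOf.2 ⟨.of_map Subtype.val (by simpa using hnd.erase v),
      by simp [hnd.mem_erase_iff, hmem], ?_⟩⟩
  rintro ⟨u, hu⟩ ⟨w, hw⟩
  have huv := (List.idxOf_inj (hmem u)).not.2 hu
  have hwv := (List.idxOf_inj (hmem w)).not.2 hw
  simp only [← List.idxOf_unattach, List.unattach_attachWith, List.idxOf_erase_of_ne (hmem v) hu,
    List.idxOf_erase_of_ne (hmem v) hw, BW.restrict, press, hu, hw, false_or]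
  by_cases huw : u = w
  · subst huw
    simp
  · rw [if_neg huw, Bool.xor_iff_ne, ne_eq, Bool.eq_iff_iff, Bool.and_eq_true, hadj, hadj, hadj,
      ← xor_iff_not_iff, adjacent_after_erase_iff ((List.idxOf_inj (hmem u)).not.2 huw) huv hwv]

end

theorem stmt3_general {V : Type} [DecidableEq V] (G : BW V) (hG : IsLinear G)
    (v : V) :
    (press G v).black v = false ∧ (∀ w, (press G v).adj v w = false) ∧
    IsLinear ((press G v).restrict (fun u => u ≠ v)) :=
  ⟨by simp [press], fun _ => by simp [press], hG.press_restrict v⟩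

/-- Self-reducibility on linear graphs: pressing a black vertex of a linear
graph yields an isolated white pressed vertex together with a linear graph
on the remaining vertices. -/
theorem stmt3 {V : Type} [DecidableEq V] (G : BW V) (hG : IsLinear G)
    (v : V) (hv : G.black v = true) :
    (press G v).black v = false ∧ (∀ w, (press G v).adj v w = false) ∧
    IsLinear ((press G v).restrict (fun u => u ≠ v)) :=
  stmt3_general G hG v
end

section
/- If P = P₁ w v P₂ is a valid pressing path of a black-and-white graph G and the vertices w and v are not adjacent in the graph G·P₁ (the graph obtained after pressing P₁), then P' = P₁ v w P₂ is also a valid pressing path of G, and G·P = G·P'. Moreover, if P is successful then so is P'. -/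
variable {V : Type} [DecidableEq V]

/-! Pressing two non-adjacent vertices commutes, since neither press changes the other's
neighbourhood; and pressing `v` leaves the colour of a non-neighbour unchanged, so both
vertices are still black when pressed in the swapped order. -/

omit [DecidableEq V] in
@[ext]
lemma BW.ext {G H : BW V} (hadj : G.adj = H.adj) (hblack : G.black = H.black) : G = H := by
  cases G; cases H; simp_all

lemma press_black_self (G : BW V) (v : V) : (press G v).black v = false := by
  simp [press]

lemma press_black_of_adj_eq_false (G : BW V) {u v : V} (hne : u ≠ v) (h : G.adj u v = false) :
    (press G v).black u = G.black u := by
  simp [press, hne, h]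

lemma press_comm (G : BW V) {w v : V} (h : G.adj w v = false) :
    press (press G w) v = press (press G v) w := by
  rcases eq_or_ne w v with rfl | hne
  · rfl
  have hne' : v ≠ w := hne.symm
  have h' : G.adj v w = false := (G.symm v w).trans h
  ext u x
  · by_cases h1 : u = v <;> by_cases h2 : x = v <;> by_cases h3 : u = w <;>
      by_cases h4 : x = w <;> by_cases h5 : u = x <;>
      simp_all [press, Bool.xor_comm, Bool.xor_left_comm]
  · by_cases h1 : u = v <;> by_cases h2 : u = w <;>
      simp_all [press, Bool.xor_comm, Bool.xor_left_comm]

lemma pressPath_append (G : BW V) (A B : List V) :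
    pressPath G (A ++ B) = pressPath (pressPath G A) B := by
  induction A generalizing G with
  | nil => rfl
  | cons a A ih => simp [pressPath, ih]

lemma validPath_append (G : BW V) (A B : List V) :
    ValidPath G (A ++ B) ↔ ValidPath G A ∧ ValidPath (pressPath G A) B := by
  induction A generalizing G with
  | nil => simp [ValidPath, pressPath]
  | cons a A ih => simp [ValidPath, pressPath, ih, and_assoc]

lemma pressPath_cons_cons_swap (G : BW V) {w v : V} (h : G.adj w v = false) (P : List V) :
    pressPath G (v :: w :: P) = pressPath G (w :: v :: P) := by
  simp only [pressPath, press_comm G h]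

lemma validPath_cons_cons_swap {G : BW V} {w v : V} {P : List V} (h : G.adj w v = false)
    (hP : ValidPath G (w :: v :: P)) : ValidPath G (v :: w :: P) := by
  obtain ⟨hw, hv, hrest⟩ := hP
  have hne : v ≠ w := by
    rintro rfl
    simp [press_black_self] at hv
  have h' : G.adj v w = false := (G.symm v w).trans h
  rw [press_black_of_adj_eq_false G hne h'] at hv
  refine ⟨hv, ?_, ?_⟩
  · rwa [press_black_of_adj_eq_false G hne.symm h]
  · rwa [press_comm G h']

/-- Swapping two consecutive presses of vertices that are non-adjacent at that
moment preserves validity, the resulting graph, and success. -/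
theorem stmt4 {V : Type} [DecidableEq V] (G : BW V) (P₁ P₂ : List V) (w v : V)
    (hvalid : ValidPath G (P₁ ++ w :: v :: P₂))
    (hna : (pressPath G P₁).adj w v = false) :
    ValidPath G (P₁ ++ v :: w :: P₂) ∧
    pressPath G (P₁ ++ v :: w :: P₂) = pressPath G (P₁ ++ w :: v :: P₂) ∧
    (Successful G (P₁ ++ w :: v :: P₂) → Successful G (P₁ ++ v :: w :: P₂)) := by
  rw [validPath_append] at hvalid
  have hpress : pressPath G (P₁ ++ v :: w :: P₂) = pressPath G (P₁ ++ w :: v :: P₂) := by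
    rw [pressPath_append, pressPath_append, pressPath_cons_cons_swap _ hna]
  have hvalid' : ValidPath G (P₁ ++ v :: w :: P₂) :=
    (validPath_append G _ _).2 ⟨hvalid.1, validPath_cons_cons_swap hna hvalid.2⟩
  exact ⟨hvalid', hpress, fun hsucc => ⟨hvalid', hpress ▸ hsucc.2⟩⟩
end

section
/- All successful pressing paths of a black-and-white graph G have the same length. Equivalently, if P and Q are both successful pressing paths of G, then |P| = |Q|. -/
variable {V : Type} [DecidableEq V]

/-!
Encode `G` by the symmetric matrix `M` over `ZMod 2` with the colours on the diagonal and the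
adjacency off it. Pressing a black vertex `v` is a pivot on the entry `M v v = 1`: every row
`r u` becomes `r u + M u v • r v`, the image of `r u` under the transvection `x ↦ x + x v • r v`.
Since `(r v) v = 1 = -1`, the kernel of that transvection is the line spanned by `r v`, which
lies in the row space, so the row space loses exactly one dimension with every press. A successful
path ends at the zero matrix, hence its length is the rank of the row space of `M`.
-/

open Module Submodule

universe u

theorem LinearMap.transvection.ker_eq_span_of_apply_eq_neg_one {R M : Type*} [Ring R]
    [AddCommGroup M] [Module R M] {f : Dual R M} {c : M} (hfc : f c = -1) :
    LinearMap.ker (LinearMap.transvection f c) = R ∙ c := by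
  ext x
  rw [LinearMap.mem_ker, LinearMap.transvection.apply, mem_span_singleton]
  constructor
  · intro h
    exact ⟨-f x, by rw [neg_smul, ← eq_neg_of_add_eq_zero_left h]⟩
  · rintro ⟨a, rfl⟩
    simp [hfc]

theorem rank_map_add_one_of_ker_eq_span {K : Type*} {M N : Type u} [DivisionRing K]
    [AddCommGroup M] [Module K M] [AddCommGroup N] [Module K N] {e : M →ₗ[K] N}
    {W : Submodule K M} {c : M} (hc : c ≠ 0) (hcW : c ∈ W) (hker : LinearMap.ker e = K ∙ c) :
    Module.rank K (W.map e) + 1 = Module.rank K W := by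
  have hrange : LinearMap.range (e ∘ₗ W.subtype) = W.map e := by
    rw [LinearMap.range_comp, range_subtype]
  have hle : K ∙ c ≤ W := (span_singleton_le_iff_mem c W).2 hcW
  have hrank_ker : Module.rank K (LinearMap.ker (e ∘ₗ W.subtype)) = 1 := by
    rw [LinearMap.ker_comp, hker, (comapSubtypeEquivOfLe hle).rank_eq,
      rank_span_set (LinearIndepOn.singleton hc)]
    simp
  rw [← (e ∘ₗ W.subtype).rank_range_add_rank_ker, hrange, hrank_ker]

theorem Bool.cast_toNat_xor (a b : Bool) :
    ((xor a b).toNat : ZMod 2) = a.toNat + b.toNat := by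
  cases a <;> cases b <;> decide

theorem Bool.cast_toNat_and (a b : Bool) :
    ((a && b).toNat : ZMod 2) = a.toNat * b.toNat := by
  cases a <;> cases b <;> decide

namespace BW

def entry (G : BW V) (u w : V) : Bool := if u = w then G.black u else G.adj u w

theorem entry_press (G : BW V) {v : V} (hv : G.black v = true) (u w : V) :
    (press G v).entry u w = xor (G.entry u w) (G.entry u v && G.entry v w) := by
  have hsymm := G.symm v w
  by_cases huv : u = v <;> by_cases hwv : w = v <;> by_cases huw : u = w <;>
    simp_all [entry, press, Ne.symm]

def mat (G : BW V) : V → V → ZMod 2 := fun u w => ((G.entry u w).toNat : ZMod 2)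

theorem mat_self_of_black (G : BW V) {v : V} (hv : G.black v = true) : G.mat v v = 1 := by
  simp [mat, entry, hv]

theorem mat_press (G : BW V) {v : V} (hv : G.black v = true) (u w : V) :
    (press G v).mat u w = G.mat u w + G.mat u v * G.mat v w := by
  rw [mat, entry_press G hv, Bool.cast_toNat_xor, Bool.cast_toNat_and]
  rfl

theorem mat_press_eq_comp (G : BW V) {v : V} (hv : G.black v = true) :
    (press G v).mat = LinearMap.transvection (LinearMap.proj v) (G.mat v) ∘ G.mat := by
  ext u w
  simp [mat_press G hv, LinearMap.transvection.apply]

def rowSpace (G : BW V) : Submodule (ZMod 2) (V → ZMod 2) := span (ZMod 2) (Set.range G.mat)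

theorem rowSpace_press (G : BW V) {v : V} (hv : G.black v = true) :
    (press G v).rowSpace =
      G.rowSpace.map (LinearMap.transvection (LinearMap.proj v) (G.mat v)) := by
  rw [rowSpace, rowSpace, mat_press_eq_comp G hv, Set.range_comp, map_span]

theorem rank_rowSpace_press_add_one (G : BW V) {v : V} (hv : G.black v = true) :
    Module.rank (ZMod 2) (press G v).rowSpace + 1 = Module.rank (ZMod 2) G.rowSpace := by
  have hpivot := G.mat_self_of_black hv
  rw [rowSpace_press G hv]
  refine rank_map_add_one_of_ker_eq_span (c := G.mat v) ?_ (subset_span ⟨v, rfl⟩)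
    (LinearMap.transvection.ker_eq_span_of_apply_eq_neg_one ?_)
  · intro h
    simp [h] at hpivot
  · rw [LinearMap.proj_apply, hpivot, CharTwo.neg_eq]

theorem rowSpace_eq_bot_of_allWhiteEmpty {G : BW V} (h : AllWhiteEmpty G) : G.rowSpace = ⊥ := by
  refine span_eq_bot.2 ?_
  rintro _ ⟨u, rfl⟩
  ext w
  simp [mat, entry, h.1, h.2]

end BW

theorem Successful.rank_rowSpace_eq_length {G : BW V} {P : List V} (hP : Successful G P) :
    Module.rank (ZMod 2) G.rowSpace = P.length := by
  induction P generalizing G with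
  | nil => simp [BW.rowSpace_eq_bot_of_allWhiteEmpty (G := G) hP.2]
  | cons v P ih =>
    obtain ⟨⟨hv, hvalid⟩, hend⟩ := hP
    rw [← G.rank_rowSpace_press_add_one hv, ih ⟨hvalid, hend⟩]
    simp

/-- All successful pressing paths of a black-and-white graph have the same length. -/
theorem stmt8 {V : Type} [DecidableEq V] (G : BW V) (P Q : List V)
    (hP : Successful G P) (hQ : Successful G Q) :
    P.length = Q.length := by
  exact_mod_cast hP.rank_rowSpace_eq_length.symm.trans hQ.rank_rowSpace_eq_length
end

section
/- Let G be a linear black-and-white graph. If in G the vertex v₁ is black, every neighbor of v₁ is black, some vertex of v₁'s component is not in the closed neighborhood of v₁, and all vertices outside the closed neighborhood of v₁ are white, then no successful pressing path of G starts with v₁. -/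
variable {V : Type} [DecidableEq V]

private lemma nodup_inj' {V : Type} {l : List V} (h : l.Nodup) {i j : ℕ} {a : V}
    (hi : l[i]? = some a) (hj : l[j]? = some a) : i = j := by
  have hi' : i < l.length := by
    rcases List.getElem?_eq_some_iff.1 hi with ⟨h', _⟩; exact h'
  exact (List.getElem?_inj hi' h).1 (hi.trans hj.symm)

/-- In a linear graph where `v₁` is black, all its neighbors are black, its
component has a vertex outside its closed neighborhood, and all vertices outside
the closed neighborhood are white, no successful pressing path starts with `v₁`. -/
theorem stmt13 {V : Type} [DecidableEq V] (G : BW V) (hG : IsLinear G) (v₁ : V)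
    (hb : G.black v₁ = true)
    (hnb : ∀ u, G.adj u v₁ = true → G.black u = true)
    (hbig : ∃ w, (BW.toSimple G).Reachable v₁ w ∧ w ≠ v₁ ∧ G.adj w v₁ = false)
    (hout : ∀ w, w ≠ v₁ → G.adj w v₁ = false → G.black w = false) :
    ∀ P : List V, ¬ Successful G (v₁ :: P) := by
  intro P hS
  obtain ⟨hv, hae⟩ := hS
  obtain ⟨hb', hv2⟩ := hv
  -- after pressing v₁, every vertex is white
  have hwhite : ∀ u, (press G v₁).black u = false := by
    intro u
    simp only [press]
    by_cases h : u = v₁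
    · simp [h]
    · simp only [if_neg h]
      by_cases ha : G.adj u v₁ = true
      · rw [ha, hnb u ha]; rfl
      · have ha' : G.adj u v₁ = false := by simpa using ha
        rw [ha', hout u h ha']; rfl
  -- after pressing v₁, some edge remains
  have hedge : ∃ u x, (press G v₁).adj u x = true := by
    obtain ⟨l, hnd, hall, hadj⟩ := hG
    obtain ⟨w, _, hwv, hwa⟩ := hbig
    obtain ⟨i, hi⟩ := List.mem_iff_getElem?.1 (hall v₁)
    obtain ⟨j, hj⟩ := List.mem_iff_getElem?.1 (hall w)
    have hil : i < l.length := by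
      rcases List.getElem?_eq_some_iff.1 hi with ⟨h', _⟩; exact h'
    have hjl : j < l.length := by
      rcases List.getElem?_eq_some_iff.1 hj with ⟨h', _⟩; exact h'
    have hji : j ≠ i := by
      intro h; subst h; rw [hi] at hj; exact hwv (Option.some_inj.1 hj).symm
    have hji1 : j ≠ i + 1 := by
      intro h; subst h
      have : G.adj v₁ w = true := (hadj v₁ w).2 ⟨i, Or.inl ⟨hi, hj⟩⟩
      rw [G.symm w v₁, this] at hwa; exact Bool.true_eq_false.mp hwa
    have hij1 : i ≠ j + 1 := by
      intro h; subst h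
      have : G.adj w v₁ = true := (hadj w v₁).2 ⟨j, Or.inl ⟨hj, hi⟩⟩
      rw [this] at hwa; exact Bool.true_eq_false.mp hwa
    -- pick indices p (adjacent to q) with q not next to i, both ≠ i
    have hpq : ∃ p q, p < l.length ∧ q < l.length ∧ (p + 1 = q ∨ q + 1 = p) ∧
        p ≠ i ∧ q ≠ i ∧ q ≠ i + 1 ∧ i ≠ q + 1 := by
      rcases lt_or_gt_of_ne hji with hlt | hgt
      · exact ⟨i - 1, i - 2, by omega, by omega, by omega, by omega, by omega,
          by omega, by omega⟩
      · exact ⟨i + 1, i + 2, by omega, by omega, by omega, by omega, by omega,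
          by omega, by omega⟩
    obtain ⟨p, q, hpl, hql, hcons, hpi, hqi, hq1, hq2⟩ := hpq
    set u := l[p] with hu
    set x := l[q] with hx
    have hup : l[p]? = some u := List.getElem?_eq_getElem hpl
    have hxq : l[q]? = some x := List.getElem?_eq_getElem hql
    have hadjux : G.adj u x = true := by
      rcases hcons with h | h
      · exact (hadj u x).2 ⟨p, Or.inl ⟨hup, by rw [h]; exact hxq⟩⟩
      · rw [G.symm]
        exact (hadj x u).2 ⟨q, Or.inl ⟨hxq, by rw [h]; exact hup⟩⟩
    have hxv : G.adj x v₁ = false := by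
      by_contra h
      have h' : G.adj x v₁ = true := by simpa using h
      obtain ⟨k, hk⟩ := (hadj x v₁).1 h'
      rcases hk with ⟨hk1, hk2⟩ | ⟨hk1, hk2⟩
      · have e1 : k = q := nodup_inj' hnd hk1 hxq
        have e2 : k + 1 = i := nodup_inj' hnd hk2 hi
        omega
      · have e1 : k = i := nodup_inj' hnd hk1 hi
        have e2 : k + 1 = q := nodup_inj' hnd hk2 hxq
        omega
    have huv : u ≠ v₁ := fun h => hpi (nodup_inj' hnd (h ▸ hup) hi)
    have hxvne : x ≠ v₁ := fun h => hqi (nodup_inj' hnd (h ▸ hxq) hi)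
    have hux : u ≠ x := by
      intro h
      have : p = q := nodup_inj' hnd (h ▸ hup) hxq
      omega
    refine ⟨u, x, ?_⟩
    simp only [press, huv, hxvne, hux, or_self, if_false, hadjux, hxv,
      Bool.and_false, Bool.xor_false]
  cases P with
  | nil =>
    obtain ⟨u, x, h⟩ := hedge
    have := hae.2 u x
    simp only [pressPath] at this
    rw [h] at this
    exact Bool.true_eq_false.mp this
  | cons v Q =>
    obtain ⟨hv3, _⟩ := hv2
    rw [hwhite v] at hv3
    exact Bool.false_eq_true.mp hv3
end
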